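/- For every natural number k ≥ 2 and all nonnegative integers a, b with a + b ≥ 1, one has κ(p^a)·κ(p^b) ≤ k²·κ(p^{a+b}) for every prime p. -/

import Mathlib

/-!
Write `a = u₁k + v₁` and `b = u₂k + v₂` with `1 ≤ vᵢ ≤ k`. Every value satisfies
`κ(p^{uk+v}) ≤ k·p^{-u-1/2}`. If `v₁ + v₂ ≤ k` there is no carry, `κ(p^{a+b}) = p^{-u₁-u₂-1}`,
and the product of the two bounds is exactly `k²·κ(p^{a+b})`. If `v₁ + v₂ > k` there is a carry
into `u`, and then already `κ(p^a)·κ(p^b) ≤ κ(p^{a+b})`: for `k ≥ 2` at least one of `v₁, v₂`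
is at least `2`, and a direct computation of the exponents of `p` suffices.
-/

open Real

theorem Nat.exists_eq_mul_add_of_pos {n k : ℕ} (hn : 0 < n) (hk : 0 < k) :
    ∃ u v, n = u * k + v ∧ 1 ≤ v ∧ v ≤ k := by
  have hdiv := Nat.div_add_mod' (n - 1) k
  have hmod := Nat.mod_lt (n - 1) hk
  exact ⟨(n - 1) / k, (n - 1) % k + 1, by omega, by omega, by omega⟩

/-- `f n` plays the role of `κ(p^n)`, with the prime `p` replaced by a real number `x`. -/
structure IsKappaPowerSeq (k : ℕ) (x : ℝ) (f : ℕ → ℝ) : Prop where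
  zero : f 0 = 1
  eq_of_rem_one : ∀ u : ℕ, f (u * k + 1) = k * x ^ (-(u : ℝ) - 1 / 2)
  eq_of_rem_ge_two : ∀ u v : ℕ, 2 ≤ v → v ≤ k → f (u * k + v) = x ^ (-(u : ℝ) - 1)

namespace IsKappaPowerSeq

variable {k : ℕ} {x : ℝ} {f : ℕ → ℝ} {u₁ u₂ v₁ v₂ : ℕ}

theorem nonneg (h : IsKappaPowerSeq k x f) (hk : 0 < k) (hx : 0 ≤ x) (n : ℕ) : 0 ≤ f n := by
  rcases n.eq_zero_or_pos with rfl | hn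
  · simp [h.zero]
  obtain ⟨u, v, rfl, hv, hvk⟩ := Nat.exists_eq_mul_add_of_pos hn hk
  rcases hv.eq_or_lt with rfl | hv
  · rw [h.eq_of_rem_one]
    exact mul_nonneg (Nat.cast_nonneg k) (rpow_nonneg hx _)
  · rw [h.eq_of_rem_ge_two u v hv hvk]
    exact rpow_nonneg hx _

theorem le_mul_rpow (h : IsKappaPowerSeq k x f) (hx : 1 ≤ x) {u v : ℕ} (hv : 1 ≤ v)
    (hvk : v ≤ k) : f (u * k + v) ≤ k * x ^ (-(u : ℝ) - 1 / 2) := by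
  rcases hv.eq_or_lt with rfl | hv
  · exact (h.eq_of_rem_one u).le
  rw [h.eq_of_rem_ge_two u v hv hvk]
  calc x ^ (-(u : ℝ) - 1) ≤ x ^ (-(u : ℝ) - 1 / 2) := rpow_le_rpow_of_exponent_le hx (by linarith)
    _ ≤ k * x ^ (-(u : ℝ) - 1 / 2) :=
      le_mul_of_one_le_left (rpow_nonneg (by linarith) _) (by exact_mod_cast (by omega : 1 ≤ k))

theorem mul_le_of_add_le (h : IsKappaPowerSeq k x f) (hx : 1 ≤ x) (hv₁ : 1 ≤ v₁) (hv₂ : 1 ≤ v₂)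
    (hv : v₁ + v₂ ≤ k) :
    f (u₁ * k + v₁) * f (u₂ * k + v₂) ≤ k ^ 2 * f (u₁ * k + v₁ + (u₂ * k + v₂)) := by
  have hsum : u₁ * k + v₁ + (u₂ * k + v₂) = (u₁ + u₂) * k + (v₁ + v₂) := by ring
  rw [hsum, h.eq_of_rem_ge_two _ _ (by omega) hv]
  calc f (u₁ * k + v₁) * f (u₂ * k + v₂)
      ≤ (k * x ^ (-(u₁ : ℝ) - 1 / 2)) * (k * x ^ (-(u₂ : ℝ) - 1 / 2)) :=
        mul_le_mul (h.le_mul_rpow hx hv₁ (by omega)) (h.le_mul_rpow hx hv₂ (by omega))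
          (h.nonneg (by omega) (by linarith) _) (by positivity)
    _ = k ^ 2 * x ^ (-((u₁ + u₂ : ℕ) : ℝ) - 1) := by
        rw [mul_mul_mul_comm, ← rpow_add (by linarith)]
        push_cast
        ring_nf

theorem mul_le_of_add_eq_succ (h : IsKappaPowerSeq k x f) (hx : 1 ≤ x) (hv₁ : 2 ≤ v₁)
    (hv₁k : v₁ ≤ k) (hv₂ : 1 ≤ v₂) (hv : v₁ + v₂ = k + 1) :
    f (u₁ * k + v₁) * f (u₂ * k + v₂) ≤ f (u₁ * k + v₁ + (u₂ * k + v₂)) := by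
  have hsum : u₁ * k + v₁ + (u₂ * k + v₂) = (u₁ + u₂ + 1) * k + 1 := by
    rw [add_add_add_comm, hv]; ring
  rw [hsum, h.eq_of_rem_one, h.eq_of_rem_ge_two u₁ v₁ hv₁ hv₁k]
  calc x ^ (-(u₁ : ℝ) - 1) * f (u₂ * k + v₂)
      ≤ x ^ (-(u₁ : ℝ) - 1) * (k * x ^ (-(u₂ : ℝ) - 1 / 2)) :=
        mul_le_mul_of_nonneg_left (h.le_mul_rpow hx hv₂ (by omega)) (rpow_nonneg (by linarith) _)
    _ = k * x ^ (-((u₁ + u₂ + 1 : ℕ) : ℝ) - 1 / 2) := by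
        rw [mul_left_comm, ← rpow_add (by linarith)]
        push_cast
        ring_nf

theorem mul_eq_of_add_ge (h : IsKappaPowerSeq k x f) (hx : 0 < x) (hv₁ : 2 ≤ v₁) (hv₁k : v₁ ≤ k)
    (hv₂ : 2 ≤ v₂) (hv₂k : v₂ ≤ k) (hv : k + 2 ≤ v₁ + v₂) :
    f (u₁ * k + v₁) * f (u₂ * k + v₂) = f (u₁ * k + v₁ + (u₂ * k + v₂)) := by
  have hsum : u₁ * k + v₁ + (u₂ * k + v₂) = (u₁ + u₂ + 1) * k + (v₁ + v₂ - k) := by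
    rw [add_add_add_comm, ← Nat.add_sub_of_le (by omega : k ≤ v₁ + v₂)]; ring_nf; omega
  rw [hsum, h.eq_of_rem_ge_two u₁ v₁ hv₁ hv₁k, h.eq_of_rem_ge_two u₂ v₂ hv₂ hv₂k,
    h.eq_of_rem_ge_two _ _ (by omega) (by omega), ← rpow_add hx]
  push_cast
  ring_nf

theorem mul_le_of_lt_add (h : IsKappaPowerSeq k x f) (hk : 2 ≤ k) (hx : 1 ≤ x) (hv₁ : 1 ≤ v₁)
    (hv₁k : v₁ ≤ k) (hv₂ : 1 ≤ v₂) (hv₂k : v₂ ≤ k) (hv : k < v₁ + v₂) :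
    f (u₁ * k + v₁) * f (u₂ * k + v₂) ≤ f (u₁ * k + v₁ + (u₂ * k + v₂)) := by
  rcases (Nat.succ_le_of_lt hv).eq_or_lt with hv | hv
  · rcases hv₁.eq_or_lt with rfl | hv₁
    · rw [mul_comm, add_comm (u₁ * k + 1)]
      exact h.mul_le_of_add_eq_succ hx (by omega) hv₂k le_rfl (by omega)
    · exact h.mul_le_of_add_eq_succ hx hv₁ hv₁k hv₂ hv.symm
  · exact (h.mul_eq_of_add_ge (by linarith) (by omega) hv₁k (by omega) hv₂k hv).le

theorem mul_le_sq_mul (h : IsKappaPowerSeq k x f) (hk : 2 ≤ k) (hx : 1 ≤ x) (a b : ℕ) :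
    f a * f b ≤ k ^ 2 * f (a + b) := by
  have hk2 : (1 : ℝ) ≤ k ^ 2 := one_le_pow₀ (by exact_mod_cast (by omega : 1 ≤ k))
  have hf := h.nonneg (by omega) (by linarith)
  rcases a.eq_zero_or_pos with rfl | ha
  · rw [h.zero, one_mul, zero_add]
    exact le_mul_of_one_le_left (hf b) hk2
  rcases b.eq_zero_or_pos with rfl | hb
  · rw [h.zero, mul_one, add_zero]
    exact le_mul_of_one_le_left (hf a) hk2
  obtain ⟨u₁, v₁, rfl, hv₁, hv₁k⟩ := Nat.exists_eq_mul_add_of_pos ha (by omega : 0 < k)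
  obtain ⟨u₂, v₂, rfl, hv₂, hv₂k⟩ := Nat.exists_eq_mul_add_of_pos hb (by omega : 0 < k)
  rcases le_or_gt (v₁ + v₂) k with hv | hv
  · exact h.mul_le_of_add_le hx hv₁ hv₂ hv
  · exact (h.mul_le_of_lt_add hk hx hv₁ hv₁k hv₂ hv₂k hv).trans
      (le_mul_of_one_le_left (hf _) hk2)

end IsKappaPowerSeq

theorem stmt0 (k : ℕ) (hk : 2 ≤ k) (κ : ℕ → ℝ)
    (hκ1 : κ 1 = 1)
    (hκA : ∀ p : ℕ, p.Prime → ∀ u : ℕ,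
      κ (p ^ (u * k + 1)) = (k : ℝ) * (p : ℝ) ^ (-(u : ℝ) - 1/2))
    (hκB : ∀ p : ℕ, p.Prime → ∀ u v : ℕ, 2 ≤ v → v ≤ k →
      κ (p ^ (u * k + v)) = (p : ℝ) ^ (-(u : ℝ) - 1))
    (p : ℕ) (hp : p.Prime) (a b : ℕ) :
    κ (p ^ a) * κ (p ^ b) ≤ (k : ℝ) ^ 2 * κ (p ^ (a + b)) :=
  have hseq : IsKappaPowerSeq k p (fun n ↦ κ (p ^ n)) :=
    ⟨by simpa using hκ1, hκA p hp, hκB p hp⟩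
  hseq.mul_le_sq_mul hk (by exact_mod_cast hp.one_lt.le) a b
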